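/- arXiv:2007.15473 — 3 statements merged into one kernel-verified Lean document; each statement's English description precedes it below -/
import Mathlib

section
/- Let U : ℝⁿ → ℝⁿ be a C¹ map whose Jacobian DU(x) is invertible at every point and satisfies ‖DU(x)⁻¹‖ ≤ K for a uniform constant K > 0 and all x ∈ ℝⁿ. Then U is a global diffeomorphism of ℝⁿ onto ℝⁿ (Hadamard's theorem). -/
/-!
Because `‖DU(x)⁻¹‖ ≤ K` uniformly, for every compact set there is a single radius `r > 0` such
that around each of its points `U` is `2K`-expanding on the ball of radius `r` and maps this ball
onto a set containing the ball of radius `r / 2K` about the image point. Hence every Lipschitz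
path can be lifted through `U`, piece by piece over subintervals of a fixed length, and lifting
segments gives surjectivity. Continuous lifts of uniformly close paths from close starting points
stay close, because their distance can never enter the gap between `2K` times the distance of
the paths and `r`. If `U a = U b`, lift the straight-line homotopy from `U` along the segment
`[a, b]` to the constant path at `U a`: the endpoint of the lift is locally constant in the
homotopy parameter, and it is `a` at one end and `b` at the other. The inverse of the resulting
bijection is `C¹` by the inverse function theorem.
-/

open Set Metric Function AffineMap Filter Topology
open scoped NNReal

theorem IsPreconnected.forall_le_of_forall_notMem_Ioc {α : Type*} [TopologicalSpace α]
    {S : Set α} (hS : IsPreconnected S) {d : α → ℝ} (hd : ContinuousOn d S) {s₀ : α}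
    (hs₀ : s₀ ∈ S) {a b : ℝ} (hab : a < b) (h₀ : d s₀ ≤ a) (hgap : ∀ s ∈ S, d s ∉ Ioc a b) :
    ∀ s ∈ S, d s ≤ a := by
  intro s hs
  by_contra! has
  have hbs : b < d s := not_le.mp fun hsb => hgap s hs ⟨has, hsb⟩
  obtain ⟨t, ht, hdt⟩ := hS.intermediate_value hs₀ hs hd ⟨h₀.trans hab.le, hbs.le⟩
  exact hgap t ht ⟨hdt ▸ hab, hdt.le⟩

theorem IsPreconnected.dist_le_of_dist_map_le {α E F : Type*} [TopologicalSpace α]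
    [PseudoMetricSpace E] [PseudoMetricSpace F] {S : Set α} (hS : IsPreconnected S)
    {f : E → F} {z z' : α → E} (hz : ContinuousOn z S) (hz' : ContinuousOn z' S)
    {C : ℝ≥0} {r a ε : ℝ} (hεa : C * ε ≤ a) (har : a < r)
    (hexp : ∀ s ∈ S, AntilipschitzWith C ((closedBall (z s) r).domRestrict f))
    (hfz : ∀ s ∈ S, dist (f (z s)) (f (z' s)) ≤ ε) {s₀ : α} (hs₀ : s₀ ∈ S)
    (h₀ : dist (z s₀) (z' s₀) ≤ a) :
    ∀ s ∈ S, dist (z s) (z' s) ≤ a := by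
  refine hS.forall_le_of_forall_notMem_Ioc (continuous_dist.comp_continuousOn (hz.prodMk hz'))
    hs₀ har h₀ fun s hs ⟨has, hsr⟩ => has.not_ge ?_
  have hr : 0 ≤ r := dist_nonneg.trans (h₀.trans har.le)
  have hmem : z' s ∈ closedBall (z s) r := by rwa [mem_closedBall, dist_comm]
  calc dist (z s) (z' s) ≤ C * dist (f (z s)) (f (z' s)) :=
        (hexp s hs).le_mul_dist ⟨z s, mem_closedBall_self hr⟩ ⟨z' s, hmem⟩
    _ ≤ C * ε := mul_le_mul_of_nonneg_left (hfz s hs) C.2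
    _ ≤ a := hεa

theorem LipschitzOnWith.Icc_union_Icc {E : Type*} [PseudoMetricSpace E] {h : ℝ → E}
    {K : ℝ≥0} {a b c : ℝ} (hab : LipschitzOnWith K h (Icc a b))
    (hbc : LipschitzOnWith K h (Icc b c)) : LipschitzOnWith K h (Icc a c) := by
  have key : ∀ x ∈ Icc a c, ∀ y ∈ Icc a c, x ≤ y → dist (h x) (h y) ≤ K * dist x y := by
    intro x hx y hy hxy
    rcases le_total y b with hyb | hby
    · exact hab.dist_le_mul x ⟨hx.1, hxy.trans hyb⟩ y ⟨hy.1, hyb⟩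
    rcases le_total x b with hxb | hbx
    · calc dist (h x) (h y) ≤ dist (h x) (h b) + dist (h b) (h y) := dist_triangle _ _ _
        _ ≤ K * dist x b + K * dist b y :=
          add_le_add (hab.dist_le_mul x ⟨hx.1, hxb⟩ b ⟨hx.1.trans hxb, le_rfl⟩)
            (hbc.dist_le_mul b ⟨le_rfl, hby.trans hy.2⟩ y ⟨hby, hy.2⟩)
        _ = K * dist x y := by
          rw [Real.dist_eq, Real.dist_eq, Real.dist_eq, abs_of_nonpos (by linarith),
            abs_of_nonpos (by linarith), abs_of_nonpos (by linarith)]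
          ring
    · exact hbc.dist_le_mul x ⟨hbx, hx.2⟩ y ⟨hby, hy.2⟩
  refine LipschitzOnWith.of_dist_le_mul fun x hx y hy => ?_
  rcases le_total x y with hxy | hyx
  · exact key x hx y hy hxy
  · rw [dist_comm, dist_comm x]
    exact key y hy x hx hyx

section PathLifting

variable {E F : Type*} [MetricSpace E] [PseudoMetricSpace F] {f : E → F} {γ : ℝ → F}
  {C L : ℝ≥0} {r ρ : ℝ}

theorem exists_lipschitzOnWith_lift_extend {z : ℝ → E} {τ τ' : ℝ} (hγ : LipschitzWith L γ)
    (hz : LipschitzOnWith (C * L) z (Icc 0 τ)) (hfz : ∀ s ∈ Icc 0 τ, f (z s) = γ s)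
    (hτ : 0 ≤ τ) (hr : 0 ≤ r)
    (hsurj : SurjOn f (closedBall (z τ) r) (closedBall (f (z τ)) ρ))
    (hanti : AntilipschitzWith C ((closedBall (z τ) r).domRestrict f))
    (hττ' : τ ≤ τ') (hτ' : L * (τ' - τ) ≤ ρ) :
    ∃ z' : ℝ → E, LipschitzOnWith (C * L) z' (Icc 0 τ') ∧ z' 0 = z 0 ∧
      ∀ s ∈ Icc 0 τ', f (z' s) = γ s := by
  set B := closedBall (z τ) r
  have hne : Nonempty E := ⟨z τ⟩
  have hfzτ : f (z τ) = γ τ := hfz τ ⟨hτ, le_rfl⟩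
  have hinj : ∀ w ∈ B, ∀ w' ∈ B, f w = f w' → w = w' := fun w hw w' hw' h =>
    congrArg Subtype.val (hanti.injective (a₁ := ⟨w, hw⟩) (a₂ := ⟨w', hw'⟩) h)
  set g := invFunOn f B
  have hgB : ∀ y ∈ closedBall (f (z τ)) ρ, g y ∈ B ∧ f (g y) = y := fun y hy =>
    ⟨invFunOn_mem (hsurj hy), invFunOn_eq (hsurj hy)⟩
  have hγB : MapsTo γ (Icc τ τ') (closedBall (f (z τ)) ρ) := fun s hs => by
    rw [mem_closedBall, hfzτ]
    calc dist (γ s) (γ τ) ≤ L * dist s τ := hγ.dist_le_mul s τ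
      _ ≤ ρ := by
        rw [Real.dist_eq, abs_of_nonneg (by linarith [hs.1])]
        exact (mul_le_mul_of_nonneg_left (by linarith [hs.2]) L.2).trans hτ'
  have hg : LipschitzOnWith C g (closedBall (f (z τ)) ρ) :=
    LipschitzOnWith.of_dist_le_mul fun y hy y' hy' => by
      have := hanti.le_mul_dist ⟨g y, (hgB y hy).1⟩ ⟨g y', (hgB y' hy').1⟩
      simpa [Subtype.dist_eq, (hgB y hy).2, (hgB y' hy').2] using this
  have hgτ : g (γ τ) = z τ := by
    have hy : γ τ ∈ closedBall (f (z τ)) ρ := hγB ⟨le_rfl, hττ'⟩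
    exact hinj _ (hgB _ hy).1 _ (mem_closedBall_self hr) ((hgB _ hy).2.trans hfzτ.symm)
  set z' : ℝ → E := fun s => if s ≤ τ then z s else g (γ s)
  have hz'_left : EqOn z' z (Icc 0 τ) := fun s hs => if_pos hs.2
  have hz'_right : EqOn z' (g ∘ γ) (Icc τ τ') := fun s hs => by
    rcases hs.1.eq_or_lt with rfl | hlt
    · simp [z', hgτ]
    · exact if_neg hlt.not_ge
  refine ⟨z', ?_, hz'_left ⟨le_rfl, hτ⟩, fun s hs => ?_⟩
  · refine LipschitzOnWith.Icc_union_Icc (b := τ) ?_ ?_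
    · exact LipschitzOnWith.of_dist_le_mul fun x hx y hy => by
        rw [hz'_left hx, hz'_left hy]; exact hz.dist_le_mul x hx y hy
    · have := (hg.comp hγ.lipschitzOnWith hγB)
      exact LipschitzOnWith.of_dist_le_mul fun x hx y hy => by
        rw [hz'_right hx, hz'_right hy]; exact this.dist_le_mul x hx y hy
  · rcases le_total s τ with hsτ | hτs
    · rw [hz'_left ⟨hs.1, hsτ⟩]; exact hfz s ⟨hs.1, hsτ⟩
    · rw [hz'_right ⟨hτs, hs.2⟩]; exact (hgB _ (hγB ⟨hτs, hs.2⟩)).2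

theorem exists_lipschitzOnWith_lift (hγ : LipschitzWith L γ) {x₀ : E} (hx₀ : f x₀ = γ 0)
    (hr : 0 ≤ r) (hρ : 0 < ρ)
    (hloc : ∀ x ∈ closedBall x₀ (C * L), SurjOn f (closedBall x r) (closedBall (f x) ρ) ∧
      AntilipschitzWith C ((closedBall x r).domRestrict f)) :
    ∃ z : ℝ → E, LipschitzOnWith (C * L) z (Icc 0 1) ∧ z 0 = x₀ ∧
      ∀ s ∈ Icc 0 1, f (z s) = γ s := by
  set δ := ρ / (L + 1)
  have hδ : 0 < δ := by positivity
  have hLδ : L * δ ≤ ρ := by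
    rw [mul_div_assoc']; exact div_le_of_le_mul₀ (by positivity) hρ.le (by linarith)
  have key : ∀ k : ℕ, ∃ z : ℝ → E, LipschitzOnWith (C * L) z (Icc 0 (min 1 (k * δ))) ∧
      z 0 = x₀ ∧ ∀ s ∈ Icc 0 (min 1 (k * δ)), f (z s) = γ s := by
    intro k
    induction k with
    | zero =>
      refine ⟨fun _ => x₀, (LipschitzWith.const' x₀).lipschitzOnWith, rfl, ?_⟩
      intro s hs
      simp only [CharP.cast_eq_zero, zero_mul, min_eq_right zero_le_one] at hs
      rw [le_antisymm hs.2 hs.1, hx₀]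
    | succ k ih =>
      obtain ⟨z, hz, hz0, hfz⟩ := ih
      set τ := min 1 (k * δ)
      have hτ : 0 ≤ τ := le_min zero_le_one (by positivity)
      have hzτ : z τ ∈ closedBall x₀ (C * L) := by
        rw [mem_closedBall, ← hz0]
        calc dist (z τ) (z 0) ≤ C * L * dist τ 0 :=
              hz.dist_le_mul _ ⟨hτ, le_rfl⟩ _ ⟨le_rfl, hτ⟩
          _ ≤ C * L := by
            rw [Real.dist_eq, sub_zero, abs_of_nonneg hτ]
            exact mul_le_of_le_one_right (by positivity) (min_le_left _ _)
      have hττ' : τ ≤ min 1 ((k + 1 : ℕ) * δ) :=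
        min_le_min le_rfl (by gcongr; exact_mod_cast k.le_succ)
      have hτ' : min 1 ((k + 1 : ℕ) * δ) - τ ≤ δ := by
        have : min 1 ((k + 1 : ℕ) * δ) ≤ min (1 + δ) (k * δ + δ) :=
          min_le_min (le_add_of_nonneg_right hδ.le) (by push_cast; linarith)
        rw [min_add_add_right] at this
        linarith
      obtain ⟨z', hz', hz'0, hfz'⟩ := exists_lipschitzOnWith_lift_extend hγ hz hfz hτ hr
        (hloc _ hzτ).1 (hloc _ hzτ).2 hττ' ((mul_le_mul_of_nonneg_left hτ' L.2).trans hLδ)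
      exact ⟨z', hz', hz'0.trans hz0, hfz'⟩
  obtain ⟨k, hk⟩ := exists_nat_ge δ⁻¹
  have h1 : min 1 (k * δ) = 1 := min_eq_left <| by
    simpa [inv_mul_cancel₀ hδ.ne'] using mul_le_mul_of_nonneg_right hk hδ.le
  simpa only [h1] using key k

end PathLifting

section NormedSpace

variable {E F : Type*} [NormedAddCommGroup E] [NormedSpace ℝ E] [NormedAddCommGroup F]
  [NormedSpace ℝ F] {f : E → F}

theorem IsCompact.exists_approximatesLinearOn_closedBall {S : Set E} (hS : IsCompact S)
    {f' : E → E →L[ℝ] F} (hf : ContDiff ℝ 1 f) (hf' : ∀ x, HasFDerivAt f (f' x) x) {c : ℝ≥0}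
    (hc : 0 < c) : ∃ r > 0, ∀ x ∈ S, ApproximatesLinearOn f (f' x) (closedBall x r) c := by
  have hfderiv : fderiv ℝ f = f' := funext fun x => (hf' x).fderiv
  have hcont : Continuous f' := hfderiv ▸ hf.continuous_fderiv one_ne_zero
  obtain ⟨δ, hδ, hclose⟩ := mem_uniformity_dist.mp <|
    hS.uniformContinuousAt_of_continuousAt f' (fun x _ => hcont.continuousAt)
      (dist_mem_uniformity (ε := c) hc)
  refine ⟨δ / 2, half_pos hδ, fun x hx a ha b hb => ?_⟩
  refine (convex_closedBall x (δ / 2)).norm_image_sub_le_of_norm_hasFDerivWithin_le'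
    (fun y _ => (hf' y).hasFDerivWithinAt) (fun y hy => ?_) hb ha
  rw [← dist_eq_norm, dist_comm]
  refine (hclose ?_ hx).le
  rw [mem_closedBall] at hy
  linarith [dist_comm x y]

namespace ApproximatesLinearOn

variable {f' : E ≃L[ℝ] F} {s : Set E} {K : ℝ≥0}

theorem antilipschitzWith_of_norm_symm_le
    (hf : ApproximatesLinearOn f (f' : E →L[ℝ] F) s (2 * K)⁻¹)
    (hK : ‖(f'.symm : F →L[ℝ] E)‖₊ ≤ K) : AntilipschitzWith (2 * K) (s.domRestrict f) := by
  refine AntilipschitzWith.of_le_mul_dist fun ⟨a, ha⟩ ⟨b, hb⟩ => ?_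
  simp only [Subtype.dist_eq, domRestrict_apply, dist_eq_norm]
  have hKc : (K : ℝ) * ((2 * K)⁻¹ : ℝ≥0) ≤ 1 / 2 := by
    push_cast
    rw [mul_inv, mul_left_comm, one_div]
    exact mul_le_of_le_one_right (by norm_num) mul_inv_le_one
  have hlin : ‖f' (a - b)‖ ≤ ‖f a - f b‖ + (2 * K)⁻¹ * ‖a - b‖ := by
    calc ‖f' (a - b)‖ = ‖(f a - f b) - (f a - f b - f' (a - b))‖ := by rw [sub_sub_cancel]
      _ ≤ ‖f a - f b‖ + ‖f a - f b - f' (a - b)‖ := norm_sub_le _ _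
      _ ≤ _ := by gcongr; exact hf a ha b hb
  have hinv : ‖a - b‖ ≤ K * ‖f' (a - b)‖ := by
    calc ‖a - b‖ = ‖(f'.symm : F →L[ℝ] E) (f' (a - b))‖ := by simp
      _ ≤ K * ‖f' (a - b)‖ := (ContinuousLinearMap.le_opNorm _ _).trans (by gcongr; exact hK)
  have h := hinv.trans (mul_le_mul_of_nonneg_left hlin K.2)
  rw [mul_add, ← mul_assoc] at h
  have := mul_le_mul_of_nonneg_right hKc (norm_nonneg (a - b))
  push_cast at h this ⊢
  linarith

theorem surjOn_closedBall_of_norm_symm_le [CompleteSpace E] {c : ℝ≥0}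
    (hf : ApproximatesLinearOn f (f' : E →L[ℝ] F) s c) (hK : ‖(f'.symm : F →L[ℝ] E)‖₊ ≤ K)
    {x : E} {r : ℝ} (hr : 0 ≤ r) (hs : closedBall x r ⊆ s) :
    SurjOn f (closedBall x r) (closedBall (f x) ((K⁻¹ - c) * r)) :=
  hf.surjOn_closedBall_of_nonlinearRightInverse
    { toFun := f'.symm
      nnnorm := K
      bound' := fun y => ((f'.symm : F →L[ℝ] E).le_opNorm y).trans (by gcongr; exact hK)
      right_inv' := f'.apply_symm_apply } hr hs

end ApproximatesLinearOn

theorem dist_lineMap_lineMap_left_le {p p' q : F} {s : ℝ} (hs : s ∈ Icc 0 1) :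
    dist (lineMap p q s) (lineMap p' q s) ≤ dist p p' := by
  rw [dist_eq_norm, dist_eq_norm, lineMap_apply_module, lineMap_apply_module,
    show (1 - s) • p + s • q - ((1 - s) • p' + s • q) = (1 - s) • (p - p') by module, norm_smul,
    Real.norm_eq_abs, abs_of_nonneg (by linarith [hs.2])]
  exact mul_le_of_le_one_left (norm_nonneg _) (by linarith [hs.1])

section GlobalInverse

variable {f' : E → E ≃L[ℝ] F} {K : ℝ≥0}

theorem exists_continuousOn_lift [ProperSpace E] (hf : ContDiff ℝ 1 f)
    (hf' : ∀ x, HasFDerivAt f (f' x : E →L[ℝ] F) x)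
    (hK : ∀ x, ‖((f' x).symm : F →L[ℝ] E)‖₊ ≤ K) (hK0 : 0 < K) {γ : ℝ → F} {L : ℝ≥0}
    (hγ : LipschitzWith L γ) {x₀ : E} (hx₀ : f x₀ = γ 0) :
    ∃ z : ℝ → E, ContinuousOn z (Icc 0 1) ∧ z 0 = x₀ ∧ ∀ s ∈ Icc 0 1, f (z s) = γ s := by
  obtain ⟨r, hr, happrox⟩ :=
    (isCompact_closedBall x₀ (2 * K * L)).exists_approximatesLinearOn_closedBall hf hf'
      (c := (2 * K)⁻¹) (by positivity)
  have hρ : 0 < ((K : ℝ)⁻¹ - ((2 * K)⁻¹ : ℝ≥0)) * r := by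
    have : (K : ℝ)⁻¹ - (2 * (K : ℝ))⁻¹ = (2 * (K : ℝ))⁻¹ := by rw [mul_inv]; ring
    push_cast
    rw [this]
    positivity
  obtain ⟨z, hz, hz0, hfz⟩ := exists_lipschitzOnWith_lift (C := 2 * K) hγ hx₀ hr.le hρ
    fun x hx => ⟨(happrox x hx).surjOn_closedBall_of_norm_symm_le (hK x) hr.le subset_rfl,
      (happrox x hx).antilipschitzWith_of_norm_symm_le (hK x)⟩
  exact ⟨z, hz.continuousOn, hz0, hfz⟩

theorem ContinuousOn.exists_pos_eq_of_dist_le (hf : ContDiff ℝ 1 f)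
    (hf' : ∀ x, HasFDerivAt f (f' x : E →L[ℝ] F) x)
    (hK : ∀ x, ‖((f' x).symm : F →L[ℝ] E)‖₊ ≤ K) (hK0 : 0 < K) {z : ℝ → E}
    (hz : ContinuousOn z (Icc 0 1)) :
    ∃ ε > 0, ∀ z' : ℝ → E, ContinuousOn z' (Icc 0 1) → dist (z 0) (z' 0) ≤ ε →
      (∀ s ∈ Icc 0 1, dist (f (z s)) (f (z' s)) ≤ ε) →
      ∀ s ∈ Icc 0 1, f (z s) = f (z' s) → z s = z' s := by
  obtain ⟨r, hr, hanti⟩ :=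
    (isCompact_Icc.image_of_continuousOn hz).exists_approximatesLinearOn_closedBall hf hf'
      (c := (2 * K)⁻¹) (by positivity)
  replace hanti : ∀ s ∈ Icc (0 : ℝ) 1,
      AntilipschitzWith (2 * K) ((closedBall (z s) r).domRestrict f) := fun s hs =>
    (hanti _ (mem_image_of_mem z hs)).antilipschitzWith_of_norm_symm_le (hK _)
  refine ⟨min (r / 2) (r / (4 * K)), by positivity, fun z' hz' h0 hfz s hs hfs => ?_⟩
  have hclose := isPreconnected_Icc.dist_le_of_dist_map_le hz hz' (le_of_eq ?_)
    (half_lt_self hr) hanti (fun s hs => (hfz s hs).trans (min_le_right _ _))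
    (left_mem_Icc.mpr zero_le_one) (h0.trans (min_le_left _ _)) s hs
  · have hmem : z' s ∈ closedBall (z s) r := by
      rw [mem_closedBall, dist_comm]; linarith
    have := (hanti s hs).le_mul_dist ⟨z s, mem_closedBall_self hr.le⟩ ⟨z' s, hmem⟩
    simpa [Subtype.dist_eq, hfs] using this
  · have : (K : ℝ) ≠ 0 := by positivity
    push_cast
    field_simp
    ring

theorem ContinuousOn.eq_apply_zero_of_map_const (hf : ContDiff ℝ 1 f)
    (hf' : ∀ x, HasFDerivAt f (f' x : E →L[ℝ] F) x)
    (hK : ∀ x, ‖((f' x).symm : F →L[ℝ] E)‖₊ ≤ K) (hK0 : 0 < K) {z : ℝ → E}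
    (hz : ContinuousOn z (Icc 0 1)) (hfz : ∀ s ∈ Icc 0 1, f (z s) = f (z 0)) :
    ∀ s ∈ Icc 0 1, z s = z 0 := by
  obtain ⟨ε, hε, hrigid⟩ := hz.exists_pos_eq_of_dist_le hf hf' hK hK0
  exact fun s hs => hrigid (fun _ => z 0) continuousOn_const (by simpa using hε.le)
    (fun s' hs' => by simpa [hfz s' hs'] using hε.le) s hs (hfz s hs)

theorem surjective_of_norm_symm_le [ProperSpace E] (hf : ContDiff ℝ 1 f)
    (hf' : ∀ x, HasFDerivAt f (f' x : E →L[ℝ] F) x)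
    (hK : ∀ x, ‖((f' x).symm : F →L[ℝ] E)‖₊ ≤ K) (hK0 : 0 < K) : Surjective f := fun y => by
  obtain ⟨z, -, -, hfz⟩ := exists_continuousOn_lift hf hf' hK hK0
    (lipschitzWith_lineMap (f 0) y) (lineMap_apply_zero _ _).symm
  exact ⟨z 1, by rw [hfz 1 (right_mem_Icc.mpr zero_le_one), lineMap_apply_one]⟩

theorem injective_of_norm_symm_le [ProperSpace E] (hf : ContDiff ℝ 1 f)
    (hf' : ∀ x, HasFDerivAt f (f' x : E →L[ℝ] F) x)
    (hK : ∀ x, ‖((f' x).symm : F →L[ℝ] E)‖₊ ≤ K) (hK0 : 0 < K) : Injective f := by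
  intro a b hab
  set c : ℝ → E := fun t => lineMap a b t
  have hc : Continuous c := lineMap_continuous
  choose z hz hz0 hfz using fun t => exists_continuousOn_lift hf hf' hK hK0
    (lipschitzWith_lineMap (f (c t)) (f a)) (lineMap_apply_zero _ _).symm
  have h1 : (1 : ℝ) ∈ Icc 0 1 := right_mem_Icc.mpr zero_le_one
  have hend : ∀ t, f (z t 1) = f a := fun t => by rw [hfz t 1 h1, lineMap_apply_one]
  have hconst : IsLocallyConstant fun t => z t 1 := by
    refine (IsLocallyConstant.iff_eventually_eq _).mpr fun t => ?_
    obtain ⟨ε, hε, hrigid⟩ := (hz t).exists_pos_eq_of_dist_le hf hf' hK hK0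
    filter_upwards [(hc.tendsto t).eventually (closedBall_mem_nhds _ hε),
      ((hf.continuous.comp hc).tendsto t).eventually (closedBall_mem_nhds _ hε)]
      with t' hct hfct
    refine (hrigid (z t') (hz t') ?_ (fun s hs => ?_) 1 h1
      ((hend t).trans (hend t').symm)).symm
    · rw [hz0, hz0]; exact mem_closedBall'.mp hct
    · rw [hfz t s hs, hfz t' s hs]
      exact (dist_lineMap_lineMap_left_le hs).trans (mem_closedBall'.mp hfct)
  have hfix : ∀ t, f (c t) = f a → z t 1 = c t := fun t ht => by
    rw [← hz0 t]
    refine (hz t).eq_apply_zero_of_map_const hf hf' hK hK0 (fun s hs => ?_) 1 h1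
    rw [hfz t s hs, hz0, ht, lineMap_same_apply]
  calc a = z 0 1 := by rw [hfix 0 (by simp [c])]; simp [c]
    _ = z 1 1 := hconst.apply_eq_of_preconnectedSpace 0 1
    _ = b := by rw [hfix 1 (by simp [c, hab])]; simp [c]

end GlobalInverse

theorem bijective_of_norm_fderiv_symm_le [ProperSpace E] {f' : E → E ≃L[ℝ] F}
    (hf : ContDiff ℝ 1 f) (hf' : ∀ x, HasFDerivAt f (f' x : E →L[ℝ] F) x) {K : ℝ}
    (hK : ∀ x, ‖((f' x).symm : F →L[ℝ] E)‖ ≤ K) : Bijective f := by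
  have hK' : ∀ x, ‖((f' x).symm : F →L[ℝ] E)‖₊ ≤ K.toNNReal + 1 := fun x => by
    rw [← NNReal.coe_le_coe, coe_nnnorm]
    push_cast
    linarith [hK x, Real.le_coe_toNNReal K]
  have hpos : 0 < K.toNNReal + 1 := by positivity
  exact ⟨injective_of_norm_symm_le hf hf' hK' hpos, surjective_of_norm_symm_le hf hf' hK' hpos⟩

end NormedSpace

theorem ContDiff.contDiff_invFun_of_bijective {𝕜 E F : Type*} [RCLike 𝕜] [NormedAddCommGroup E]
    [NormedSpace 𝕜 E] [CompleteSpace E] [NormedAddCommGroup F] [NormedSpace 𝕜 F] {f : E → F}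
    {f' : E → E ≃L[𝕜] F} {n : WithTop ℕ∞} (hf : ContDiff 𝕜 n f) (hn : n ≠ 0)
    (hf' : ∀ x, HasFDerivAt f (f' x : E →L[𝕜] F) x) (hbij : Bijective f) :
    ContDiff 𝕜 n (invFun f) := by
  let h : E ≃ₜ F := (Equiv.ofBijective f hbij).toHomeomorphOfContinuousOpen hf.continuous <|
    isOpenMap_of_hasStrictFDerivAt_equiv fun x => hf.contDiffAt.hasStrictFDerivAt' (hf' x) hn
  have hinv : invFun f = h.symm := funext fun y => hbij.1 <| by
    rw [invFun_eq (hbij.2 y)]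
    exact (h.apply_symm_apply y).symm
  rw [hinv]
  exact h.contDiff_symm hf' hf

theorem hadamard_global_diffeomorphism_general
    (n : ℕ) (U : (Fin n → ℝ) → (Fin n → ℝ)) (hU : ContDiff ℝ 1 U)
    (DU : (Fin n → ℝ) → Matrix (Fin n) (Fin n) ℝ)
    (hDU : ∀ x, HasFDerivAt U ((Matrix.toLin' (DU x)).toContinuousLinearMap) x)
    (hDUinv : ∀ x, IsUnit (DU x))
    (K : ℝ)
    (hbound : ∀ x, ‖(Matrix.toEuclideanLin (DU x)⁻¹).toContinuousLinearMap‖ ≤ K) :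
    Function.Bijective U ∧ ContDiff ℝ 1 (Function.invFun U) := by
  -- `Fin n → ℝ` carries the sup norm, so the Euclidean bound is transported through `e` and `e'`.
  let e : EuclideanSpace ℝ (Fin n) →L[ℝ] (Fin n → ℝ) := EuclideanSpace.equiv (Fin n) ℝ
  let e' : (Fin n → ℝ) →L[ℝ] EuclideanSpace ℝ (Fin n) := (EuclideanSpace.equiv (Fin n) ℝ).symm
  have hdet : ∀ x, IsUnit (DU x).det := fun x => (Matrix.isUnit_iff_isUnit_det _).mp (hDUinv x)
  let D : (Fin n → ℝ) → (Fin n → ℝ) ≃L[ℝ] (Fin n → ℝ) := fun x =>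
    (Matrix.toLin'OfInv (Matrix.nonsing_inv_mul _ (hdet x))
      (Matrix.mul_nonsing_inv _ (hdet x))).toContinuousLinearEquiv
  have hD : ∀ x, HasFDerivAt U (D x : (Fin n → ℝ) →L[ℝ] (Fin n → ℝ)) x := hDU
  have hDbound : ∀ x, ‖((D x).symm : (Fin n → ℝ) →L[ℝ] (Fin n → ℝ))‖ ≤ ‖e‖ * K * ‖e'‖ := by
    intro x
    have hDsymm : ((D x).symm : (Fin n → ℝ) →L[ℝ] (Fin n → ℝ)) =
        e.comp ((Matrix.toEuclideanLin (DU x)⁻¹).toContinuousLinearMap.comp e') := by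
      ext; rfl
    rw [hDsymm, mul_assoc]
    refine (ContinuousLinearMap.opNorm_comp_le _ _).trans
      (mul_le_mul_of_nonneg_left ?_ (norm_nonneg _))
    exact (ContinuousLinearMap.opNorm_comp_le _ _).trans
      (mul_le_mul_of_nonneg_right (hbound x) (norm_nonneg _))
  have hbij := bijective_of_norm_fderiv_symm_le hU hD hDbound
  exact ⟨hbij, hU.contDiff_invFun_of_bijective one_ne_zero hD hbij⟩

theorem hadamard_global_diffeomorphism
    (n : ℕ) (U : (Fin n → ℝ) → (Fin n → ℝ)) (hU : ContDiff ℝ 1 U)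
    (DU : (Fin n → ℝ) → Matrix (Fin n) (Fin n) ℝ)
    (hDU : ∀ x, HasFDerivAt U ((Matrix.toLin' (DU x)).toContinuousLinearMap) x)
    (hDUinv : ∀ x, IsUnit (DU x))
    (K : ℝ) (hK : 0 < K)
    (hbound : ∀ x, ‖(Matrix.toEuclideanLin (DU x)⁻¹).toContinuousLinearMap‖ ≤ K) :
    Function.Bijective U ∧ ContDiff ℝ 1 (Function.invFun U) :=
  hadamard_global_diffeomorphism_general n U hU DU hDU hDUinv K hbound
end

section
/- Let M ⊆ ℝⁿ be open and convex and let U : M → ℝⁿ be a C² diffeomorphism onto its image satisfying the compatibility condition Σₘ ∂²ₖᵢUᵐ(x)·∂ⱼUᵐ(x) = Σₘ ∂²ᵢⱼUᵐ(x)·∂ₖUᵐ(x) for all i, j, k and all x ∈ M. Then there exists a strictly convex C² function Φ : M → ℝ whose Hessian satisfies ∂²ᵢⱼΦ(x) = Σₘ ∂ᵢUᵐ(x)·∂ⱼUᵐ(x) for all x ∈ M. -/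
open Finset Matrix

variable {n : ℕ}

noncomputable def dotLM (n : ℕ) : (Fin n → ℝ) →ₗ[ℝ] (Fin n → ℝ) →ₗ[ℝ] ℝ :=
  LinearMap.mk₂ ℝ (fun v w => ∑ i, v i * w i)
    (fun a b c => by simp [add_mul, Finset.sum_add_distrib])
    (fun c a b => by simp [Finset.mul_sum, mul_assoc, mul_comm, mul_left_comm])
    (fun a b c => by simp [mul_add, Finset.sum_add_distrib])
    (fun c a b => by simp [Finset.mul_sum, mul_assoc, mul_comm, mul_left_comm])

noncomputable def dotC (n : ℕ) : (Fin n → ℝ) →L[ℝ] (Fin n → ℝ) →L[ℝ] ℝ :=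
  LinearMap.toContinuousLinearMap
    ((LinearMap.toContinuousLinearMap :
        ((Fin n → ℝ) →ₗ[ℝ] ℝ) ≃ₗ[ℝ] ((Fin n → ℝ) →L[ℝ] ℝ)).toLinearMap.comp (dotLM n))

@[simp] lemma dotC_apply (v w : Fin n → ℝ) : dotC n v w = ∑ i, v i * w i := by
  simp [dotC, dotLM]

noncomputable def mulVecLM (n : ℕ) :
    Matrix (Fin n) (Fin n) ℝ →ₗ[ℝ] ((Fin n → ℝ) →ₗ[ℝ] (Fin n → ℝ)) where
  toFun := Matrix.mulVecLin
  map_add' := fun A B => by ext v i; simp [Matrix.add_mulVec]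
  map_smul' := fun c A => by ext v i; simp [Matrix.smul_mulVec]

noncomputable def matC (n : ℕ) : Matrix (Fin n) (Fin n) ℝ →L[ℝ] (Fin n → ℝ) →L[ℝ] (Fin n → ℝ) :=
  LinearMap.toContinuousLinearMap
    ((LinearMap.toContinuousLinearMap :
        ((Fin n → ℝ) →ₗ[ℝ] (Fin n → ℝ)) ≃ₗ[ℝ] ((Fin n → ℝ) →L[ℝ] (Fin n → ℝ))).toLinearMap.comp
      (mulVecLM n))

@[simp] lemma matC_apply (A : Matrix (Fin n) (Fin n) ℝ) (v : Fin n → ℝ) :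
    matC n A v = A.mulVec v := by
  simp [matC, mulVecLM]

lemma dot_mulVec_symm (A : Matrix (Fin n) (Fin n) ℝ) (hA : ∀ a b, A a b = A b a)
    (v w : Fin n → ℝ) : ∑ a, A.mulVec v a * w a = ∑ a, A.mulVec w a * v a := by
  simp only [Matrix.mulVec, dotProduct, Finset.sum_mul]
  rw [Finset.sum_comm]
  refine Finset.sum_congr rfl fun a _ => Finset.sum_congr rfl fun b _ => ?_
  rw [hA a b]; ring


lemma clm_pi_ext {n : ℕ} {α : Type*} [NormedAddCommGroup α] [NormedSpace ℝ α]
    {f g : (Fin n → ℝ) →L[ℝ] α} (h : ∀ b, f (Pi.single b 1) = g (Pi.single b 1)) : f = g := by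
  apply ContinuousLinearMap.coe_injective
  apply Module.Basis.ext (Pi.basisFun ℝ (Fin n))
  intro b
  simpa [Pi.basisFun_apply] using h b

lemma quad_pos {n : ℕ} (A : Matrix (Fin n) (Fin n) ℝ) (hA : IsUnit A)
    (h : Fin n → ℝ) (hh : h ≠ 0) :
    0 < ∑ a, (∑ b, (∑ m, A m a * A m b) * h b) * h a := by
  have key : ∑ a, (∑ b, (∑ m, A m a * A m b) * h b) * h a = ∑ m, (A.mulVec h m)^2 := by
    have e1 : ∀ a, (∑ b, (∑ m, A m a * A m b) * h b) * h a
        = ∑ b, ∑ m, A m a * A m b * h b * h a := by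
      intro a; rw [Finset.sum_mul]; congr 1; funext b; rw [Finset.sum_mul, Finset.sum_mul]
    simp only [e1]
    rw [show (∑ a, ∑ b, ∑ m, A m a * A m b * h b * h a)
        = ∑ m, ∑ a, ∑ b, A m a * A m b * h b * h a from
      (Finset.sum_congr rfl fun a _ => Finset.sum_comm).trans Finset.sum_comm]
    congr 1; funext m
    rw [Matrix.mulVec, sq, dotProduct, Finset.sum_mul_sum]
    congr 1; funext a; congr 1; funext b
    ring
  rw [key]
  rcases lt_or_eq_of_le (Finset.sum_nonneg (fun m _ => sq_nonneg (A.mulVec h m))) with hlt | heq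
  · exact hlt
  · exfalso
    have hz := (Finset.sum_eq_zero_iff_of_nonneg (fun m _ => sq_nonneg (A.mulVec h m))).1 heq.symm
    have hmv : A.mulVec h = 0 := by
      funext m
      have := hz m (Finset.mem_univ m)
      exact pow_eq_zero_iff two_ne_zero |>.1 this
    obtain ⟨B, hB⟩ := hA.exists_left_inv
    apply hh
    calc h = (1 : Matrix (Fin n) (Fin n) ℝ).mulVec h := by rw [Matrix.one_mulVec]
      _ = (B * A).mulVec h := by rw [hB]
      _ = B.mulVec (A.mulVec h) := (Matrix.mulVec_mulVec h B A).symm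
      _ = B.mulVec 0 := by rw [hmv]
      _ = 0 := Matrix.mulVec_zero B

lemma potential {n : ℕ} {M : Set (Fin n → ℝ)} (hMo : IsOpen M) (hMc : Convex ℝ M)
    {x₀ : Fin n → ℝ} (hx₀ : x₀ ∈ M)
    (F : (Fin n → ℝ) → (Fin n → ℝ)) (J : (Fin n → ℝ) → Matrix (Fin n) (Fin n) ℝ)
    (hF : ∀ x ∈ M, HasFDerivAt F (matC n (J x)) x)
    (hJc : ContinuousOn J M)
    (hJsymm : ∀ x ∈ M, ∀ a b, J x a b = J x b a) :
    ∀ x ∈ M, HasFDerivAt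
      (fun y => ∫ t in (0:ℝ)..1, dotC n (F (x₀ + t • (y - x₀))) (y - x₀))
      (dotC n (F x)) x := by
  have hFc : ContinuousOn F M := fun z hz => (hF z hz).continuousAt.continuousWithinAt
  intro x hx
  obtain ⟨ε, hε, hball⟩ := Metric.nhds_basis_closedBall.mem_iff.1 (hMo.mem_nhds hx)
  set K := (fun p : ℝ × (Fin n → ℝ) => x₀ + p.1 • (p.2 - x₀)) ''
      (Set.Icc (0:ℝ) 1 ×ˢ Metric.closedBall x ε) with hKdef
  have hKcomp : IsCompact K :=
    ((isCompact_Icc).prod (isCompact_closedBall x ε)).image (by fun_prop)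
  have hKM : K ⊆ M := by
    rintro _ ⟨⟨t, y⟩, ⟨⟨ht0, ht1⟩, hy⟩, rfl⟩
    have hyM := hball hy
    have hconv := hMc hx₀ hyM (by linarith : (0:ℝ) ≤ 1 - t) ht0 (by ring)
    convert hconv using 1
    module
  have hmemK : ∀ t ∈ Set.Icc (0:ℝ) 1, ∀ y ∈ Metric.closedBall x ε,
      x₀ + t • (y - x₀) ∈ K := fun t ht y hy => ⟨(t, y), ⟨ht, hy⟩, rfl⟩
  have hmemM : ∀ t ∈ Set.Icc (0:ℝ) 1, ∀ y ∈ Metric.closedBall x ε,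
      x₀ + t • (y - x₀) ∈ M := fun t ht y hy => hKM (hmemK t ht y hy)
  have hxcb : x ∈ Metric.closedBall x ε := Metric.mem_closedBall_self hε.le
  obtain ⟨C₁, hC₁⟩ := hKcomp.exists_bound_of_continuousOn (hFc.mono hKM)
  obtain ⟨C₂, hC₂⟩ := hKcomp.exists_bound_of_continuousOn
    ((matC n).continuous.comp_continuousOn (hJc.mono hKM))
  set D : (Fin n → ℝ) → ℝ → ((Fin n → ℝ) →L[ℝ] ℝ) := fun y t =>
    t • (((dotC n).flip (y - x₀)).comp (matC n (J (x₀ + t • (y - x₀)))))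
      + dotC n (F (x₀ + t • (y - x₀))) with hDdef
  -- continuity of things in t along the segment from x
  have hLcont : ∀ y, Continuous (fun t : ℝ => x₀ + t • (y - x₀)) := by
    intro y; fun_prop
  have hDcont : ContinuousOn (D x) (Set.uIcc (0:ℝ) 1) := by
    rw [Set.uIcc_of_le zero_le_one]
    apply ContinuousOn.add
    · apply ContinuousOn.smul continuousOn_id
      apply ContinuousOn.clm_comp continuousOn_const
      exact ((matC n).continuous.comp_continuousOn
        ((hJc.mono hKM).comp (hLcont x).continuousOn
          (fun t ht => hmemK t ht x hxcb)))
    · exact (dotC n).continuous.comp_continuousOn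
        ((hFc.mono hKM).comp (hLcont x).continuousOn (fun t ht => hmemK t ht x hxcb))
  have hDint : IntervalIntegrable (D x) MeasureTheory.volume 0 1 := by
    rw [show Set.uIcc (0:ℝ) 1 = Set.uIcc 0 1 from rfl] at hDcont
    exact hDcont.intervalIntegrable

  -- measurability of slices near x
  have hmeas : ∀ᶠ y in nhds x, MeasureTheory.AEStronglyMeasurable
      (fun t => dotC n (F (x₀ + t • (y - x₀))) (y - x₀))
      (MeasureTheory.volume.restrict (Set.uIoc (0:ℝ) 1)) := by
    filter_upwards [Metric.closedBall_mem_nhds x hε] with y hy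
    apply ContinuousOn.aestronglyMeasurable ?_ measurableSet_uIoc
    have hsub : Set.uIoc (0:ℝ) 1 ⊆ Set.Icc (0:ℝ) 1 := by
      rw [Set.uIoc_of_le zero_le_one]; exact Set.Ioc_subset_Icc_self
    apply ContinuousOn.clm_apply ?_ continuousOn_const
    exact ((dotC n).continuous.comp_continuousOn
      (((hFc.mono hKM).comp (hLcont y).continuousOn
        (fun t ht => hmemK t (hsub ht) y hy)).mono (fun t ht => ht)))
  have hint0 : IntervalIntegrable (fun t => dotC n (F (x₀ + t • (x - x₀))) (x - x₀))
      MeasureTheory.volume 0 1 := by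
    apply ContinuousOn.intervalIntegrable
    rw [Set.uIcc_of_le zero_le_one]
    apply ContinuousOn.clm_apply ?_ continuousOn_const
    exact (dotC n).continuous.comp_continuousOn
      ((hFc.mono hKM).comp (hLcont x).continuousOn (fun t ht => hmemK t ht x hxcb))
  have hmeasD : MeasureTheory.AEStronglyMeasurable (D x)
      (MeasureTheory.volume.restrict (Set.uIoc (0:ℝ) 1)) := by
    apply ContinuousOn.aestronglyMeasurable ?_ measurableSet_uIoc
    apply hDcont.mono
    rw [Set.uIoc_of_le zero_le_one, Set.uIcc_of_le zero_le_one]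
    exact Set.Ioc_subset_Icc_self
  -- the bound
  set bnd : ℝ := ‖dotC n‖ * (‖x - x₀‖ + ε) * C₂ + ‖dotC n‖ * C₁ with hbnd
  have hbound : ∀ᵐ t ∂MeasureTheory.volume, t ∈ Set.uIoc (0:ℝ) 1 →
      ∀ y ∈ Metric.ball x ε, ‖D y t‖ ≤ bnd := by
    apply Filter.Eventually.of_forall
    intro t ht y hy
    have ht' : t ∈ Set.Icc (0:ℝ) 1 := by
      rw [Set.uIoc_of_le zero_le_one] at ht; exact ⟨ht.1.le, ht.2⟩
    have hycb : y ∈ Metric.closedBall x ε := Metric.ball_subset_closedBall hy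
    have hLK : x₀ + t • (y - x₀) ∈ K := hmemK t ht' y hycb
    have h1 : ‖t • (((dotC n).flip (y - x₀)).comp (matC n (J (x₀ + t • (y - x₀)))))‖
        ≤ ‖dotC n‖ * (‖x - x₀‖ + ε) * C₂ := by
      rw [norm_smul t (((dotC n).flip (y - x₀)).comp (matC n (J (x₀ + t • (y - x₀)))))]
      have htle : |t| ≤ 1 := by rw [abs_le]; constructor <;> [linarith [ht'.1]; exact ht'.2]
      have hcomp : ‖(((dotC n).flip (y - x₀)).comp (matC n (J (x₀ + t • (y - x₀)))))‖
          ≤ ‖dotC n‖ * (‖x - x₀‖ + ε) * C₂ := by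
        calc ‖(((dotC n).flip (y - x₀)).comp (matC n (J (x₀ + t • (y - x₀)))))‖
            ≤ ‖(dotC n).flip (y - x₀)‖ * ‖matC n (J (x₀ + t • (y - x₀)))‖ :=
              ContinuousLinearMap.opNorm_comp_le _ _
          _ ≤ (‖dotC n‖ * (‖x - x₀‖ + ε)) * C₂ := by
              apply mul_le_mul
              · calc ‖(dotC n).flip (y - x₀)‖ ≤ ‖(dotC n).flip‖ * ‖y - x₀‖ :=
                      ContinuousLinearMap.le_opNorm _ _
                  _ ≤ ‖dotC n‖ * (‖x - x₀‖ + ε) := by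
                      apply mul_le_mul
                      · exact le_of_eq (ContinuousLinearMap.opNorm_flip _)
                      · calc ‖y - x₀‖ = ‖(y - x) + (x - x₀)‖ := by ring_nf
                          _ ≤ ‖y - x‖ + ‖x - x₀‖ := norm_add_le _ _
                          _ ≤ ε + ‖x - x₀‖ := by
                              have := Metric.mem_closedBall.1 hycb
                              rw [dist_eq_norm] at this
                              linarith
                          _ = ‖x - x₀‖ + ε := by ring
                      · positivity
                      · positivity
              · exact hC₂ _ hLK
              · positivity
              · positivity
          _ = ‖dotC n‖ * (‖x - x₀‖ + ε) * C₂ := by ring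
      calc |t| * ‖_‖ ≤ 1 * (‖dotC n‖ * (‖x - x₀‖ + ε) * C₂) := by
            apply mul_le_mul htle hcomp (norm_nonneg _) zero_le_one
        _ = ‖dotC n‖ * (‖x - x₀‖ + ε) * C₂ := one_mul _
    have h2 : ‖dotC n (F (x₀ + t • (y - x₀)))‖ ≤ ‖dotC n‖ * C₁ := by
      calc ‖dotC n (F (x₀ + t • (y - x₀)))‖ ≤ ‖dotC n‖ * ‖F (x₀ + t • (y - x₀))‖ :=
            ContinuousLinearMap.le_opNorm _ _
        _ ≤ ‖dotC n‖ * C₁ := by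
            have h0 : (0:ℝ) ≤ ‖dotC n‖ := by positivity
            exact mul_le_mul_of_nonneg_left (hC₁ _ hLK) h0
    calc ‖D y t‖ ≤ _ + _ := norm_add_le _ _
      _ ≤ bnd := add_le_add h1 h2
  have hbint : IntervalIntegrable (fun _ : ℝ => bnd) MeasureTheory.volume 0 1 :=
    intervalIntegrable_const
  -- differentiability of slices
  have hderiv : ∀ᵐ t ∂MeasureTheory.volume, t ∈ Set.uIoc (0:ℝ) 1 →
      ∀ y ∈ Metric.ball x ε,
        HasFDerivAt (fun y => dotC n (F (x₀ + t • (y - x₀))) (y - x₀)) (D y t) y := by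
    apply Filter.Eventually.of_forall
    intro t ht y hy
    have ht' : t ∈ Set.Icc (0:ℝ) 1 := by
      rw [Set.uIoc_of_le zero_le_one] at ht; exact ⟨ht.1.le, ht.2⟩
    have hycb : y ∈ Metric.closedBall x ε := Metric.ball_subset_closedBall hy
    have hLM : x₀ + t • (y - x₀) ∈ M := hmemM t ht' y hycb
    have hinner : HasFDerivAt (fun y : Fin n → ℝ => x₀ + t • (y - x₀))
        (t • ContinuousLinearMap.id ℝ (Fin n → ℝ)) y := by
      have := (((hasFDerivAt_id y).sub_const x₀).const_smul (𝕜 := ℝ) (R := ℝ) t)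
      exact this.const_add x₀
    have hg : HasFDerivAt (fun y : Fin n → ℝ => F (x₀ + t • (y - x₀)))
        ((matC n (J (x₀ + t • (y - x₀)))).comp (t • ContinuousLinearMap.id ℝ (Fin n → ℝ)))
        y := (hF _ hLM).comp y hinner
    have hc : HasFDerivAt (fun y : Fin n → ℝ => dotC n (F (x₀ + t • (y - x₀))))
        ((dotC n).comp ((matC n (J (x₀ + t • (y - x₀)))).comp
          (t • ContinuousLinearMap.id ℝ (Fin n → ℝ)))) y :=
      (dotC n).hasFDerivAt.comp y hg
    have hu : HasFDerivAt (fun y : Fin n → ℝ => y - x₀)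
        (ContinuousLinearMap.id ℝ (Fin n → ℝ)) y := (hasFDerivAt_id y).sub_const x₀
    have hfull := hc.clm_apply hu
    refine hfull.congr_fderiv ?_
    ext h
    simp [hDdef]
    ring
  -- apply the dominated differentiation theorem
  have hmain := intervalIntegral.hasFDerivAt_integral_of_dominated_of_fderiv_le
    (μ := MeasureTheory.volume) (F := fun y t => dotC n (F (x₀ + t • (y - x₀))) (y - x₀))
    (F' := fun y t => D y t) (bound := fun _ => bnd)
    (Metric.ball_mem_nhds x hε) hmeas hint0 hmeasD hbound hbint hderiv
  -- identify the derivative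
  have hkey : (∫ t in (0:ℝ)..1, D x t) = dotC n (F x) := by
    apply ContinuousLinearMap.ext
    intro h
    rw [ContinuousLinearMap.intervalIntegral_apply hDint h]
    have happcont : ContinuousOn (fun t => (D x t) h) (Set.uIcc (0:ℝ) 1) :=
      hDcont.clm_apply continuousOn_const
    have hft : ∀ t ∈ Set.uIcc (0:ℝ) 1,
        HasDerivAt (fun t => t * dotC n (F (x₀ + t • (x - x₀))) h) ((D x t) h) t := by
      intro t ht
      rw [Set.uIcc_of_le zero_le_one] at ht
      have hLM : x₀ + t • (x - x₀) ∈ M := hmemM t ht x hxcb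
      have hline : HasDerivAt (fun t : ℝ => x₀ + t • (x - x₀)) (x - x₀) t := by
        have := ((hasDerivAt_id t).smul_const (x - x₀)).const_add x₀
        simpa using this
      have hFt : HasDerivAt (fun t : ℝ => F (x₀ + t • (x - x₀)))
          (matC n (J (x₀ + t • (x - x₀))) (x - x₀)) t :=
        (hF _ hLM).comp_hasDerivAt t hline
      have happ : HasDerivAt (fun t : ℝ => dotC n (F (x₀ + t • (x - x₀))) h)
          (dotC n (matC n (J (x₀ + t • (x - x₀))) (x - x₀)) h) t :=
        (((dotC n).flip h).hasFDerivAt).comp_hasDerivAt t hFt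
      have hmul := (hasDerivAt_id t).fun_mul happ
      refine hmul.congr_deriv ?_
      simp only [matC_apply, dotC_apply, hDdef]
      have hsymm := dot_mulVec_symm (J (x₀ + t • (x - x₀)))
        (hJsymm _ hLM) h (x - x₀)
      simp only [ContinuousLinearMap.add_apply, ContinuousLinearMap.smul_apply,
        ContinuousLinearMap.comp_apply, ContinuousLinearMap.flip_apply,
        matC_apply, dotC_apply, smul_eq_mul]
      rw [hsymm]
      simp only [id_eq]
      ring
    rw [intervalIntegral.integral_eq_sub_of_hasDerivAt hft
      (happcont.intervalIntegrable)]
    norm_num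
  rw [hkey] at hmain
  exact hmain

theorem diffeomorphism_gives_convex_function
    (n : ℕ) (M : Set (Fin n → ℝ)) (hMopen : IsOpen M) (hMconv : Convex ℝ M)
    (U : (Fin n → ℝ) → (Fin n → ℝ)) (hUsmooth : ContDiffOn ℝ 2 U M)
    (hUinj : Set.InjOn U M)
    (DU : (Fin n → ℝ) → Matrix (Fin n) (Fin n) ℝ)
    (D2U : (Fin n → ℝ) → Fin n → Matrix (Fin n) (Fin n) ℝ)
    (hDU : ∀ z ∈ M, ∀ m i, HasDerivAt (fun s => U (Function.update z i s) m) (DU z m i) (z i))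
    (hD2U : ∀ z ∈ M, ∀ m i j,
      HasDerivAt (fun s => DU (Function.update z j s) m i) (D2U z m i j) (z j))
    (hDUinv : ∀ z ∈ M, IsUnit (DU z))
    (hcompat : ∀ z ∈ M, ∀ i j k,
      ∑ m, D2U z m k i * DU z m j = ∑ m, D2U z m i j * DU z m k) :
    ∃ Φ : (Fin n → ℝ) → ℝ, ∃ gradΦ : (Fin n → ℝ) → (Fin n → ℝ),
      StrictConvexOn ℝ M Φ ∧ ContDiffOn ℝ 2 Φ M ∧
      (∀ z ∈ M, ∀ i, HasDerivAt (fun s => Φ (Function.update z i s)) (gradΦ z i) (z i)) ∧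
      (∀ z ∈ M, ∀ i j, HasDerivAt (fun s => gradΦ (Function.update z j s) i)
        (∑ m, DU z m i * DU z m j) (z j)) := by
  rcases Set.eq_empty_or_nonempty M with hME | ⟨x₀, hx₀⟩
  · refine ⟨0, 0, ⟨hMconv, ?_⟩, ?_, ?_, ?_⟩
    · intro x hx; rw [hME] at hx; exact absurd hx (Set.notMem_empty x)
    · rw [hME]; intro z hz; exact absurd hz (Set.notMem_empty z)
    · intro z hz; rw [hME] at hz; exact absurd hz (Set.notMem_empty z)
    · intro z hz; rw [hME] at hz; exact absurd hz (Set.notMem_empty z)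
  -- basic smoothness facts
  have hUdiffAt : ∀ z ∈ M, ContDiffAt ℝ 2 U z := fun z hz =>
    hUsmooth.contDiffAt (hMopen.mem_nhds hz)
  have hUhas : ∀ z ∈ M, HasFDerivAt U (fderiv ℝ U z) z := fun z hz =>
    ((hUdiffAt z hz).differentiableAt (by norm_num)).hasFDerivAt
  have hfd1 : ∀ z ∈ M, ContDiffAt ℝ 1 (fderiv ℝ U) z := fun z hz =>
    (hUdiffAt z hz).fderiv_right (by norm_num)
  set B := fun z => fderiv ℝ (fderiv ℝ U) z with hBdef
  have hBhas : ∀ z ∈ M, HasFDerivAt (fderiv ℝ U) (B z) z := fun z hz =>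
    ((hfd1 z hz).differentiableAt (by norm_num)).hasFDerivAt
  -- identification of DU with the Fréchet derivative
  have hDUeq : ∀ z ∈ M, ∀ m i, DU z m i = fderiv ℝ U z (Pi.single i 1) m := by
    intro z hz m i
    have h0 : HasDerivAt (Function.update z i) (Pi.single i 1) (z i) :=
      hasDerivAt_update z i (z i)
    have hUz : HasFDerivAt U (fderiv ℝ U z) (Function.update z i (z i)) := by
      rw [Function.update_eq_self]; exact hUhas z hz
    have h1 : HasDerivAt (fun s => U (Function.update z i s))
        (fderiv ℝ U z (Pi.single i 1)) (z i) := hUz.comp_hasDerivAt (z i) h0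
    have h2 : HasDerivAt (fun s => U (Function.update z i s) m)
        (fderiv ℝ U z (Pi.single i 1) m) (z i) := by
      have := (ContinuousLinearMap.proj (R := ℝ) (φ := fun _ : Fin n => ℝ) m).hasFDerivAt.comp_hasDerivAt (z i) h1
      simpa [Function.comp_def] using this
    exact (hDU z hz m i).unique h2
  -- derivative of the nice version of DU-entries
  have hniceHas : ∀ z ∈ M, ∀ m i,
      HasFDerivAt (fun w => fderiv ℝ U w (Pi.single i 1) m)
        (((ContinuousLinearMap.proj m).comp
          (ContinuousLinearMap.apply ℝ (Fin n → ℝ) (Pi.single i 1))).comp (B z)) z := by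
    intro z hz m i
    exact (((ContinuousLinearMap.proj m).comp
      (ContinuousLinearMap.apply ℝ (Fin n → ℝ) (Pi.single i 1))).hasFDerivAt).comp z (hBhas z hz)
  -- identification of D2U with the second Fréchet derivative
  have hD2Ueq : ∀ z ∈ M, ∀ m i j, D2U z m i j = B z (Pi.single j 1) (Pi.single i 1) m := by
    intro z hz m i j
    have h0 : HasDerivAt (Function.update z j) (Pi.single j 1) (z j) :=
      hasDerivAt_update z j (z j)
    have hnz : HasFDerivAt (fun w => fderiv ℝ U w (Pi.single i 1) m)
        (((ContinuousLinearMap.proj m).comp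
          (ContinuousLinearMap.apply ℝ (Fin n → ℝ) (Pi.single i 1))).comp (B z))
        (Function.update z j (z j)) := by
      rw [Function.update_eq_self]; exact hniceHas z hz m i
    have h1 := hnz.comp_hasDerivAt (z j) h0
    have hnb : ∀ᶠ s in nhds (z j), Function.update z j s ∈ M := by
      apply h0.continuousAt.preimage_mem_nhds
      rw [Function.update_eq_self]
      exact hMopen.mem_nhds hz
    have h2 : HasDerivAt (fun s => DU (Function.update z j s) m i)
        ((((ContinuousLinearMap.proj m).comp
          (ContinuousLinearMap.apply ℝ (Fin n → ℝ) (Pi.single i 1))).comp (B z))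
            (Pi.single j 1)) (z j) := by
      apply h1.congr_of_eventuallyEq
      filter_upwards [hnb] with s hs
      exact hDUeq _ hs m i
    have := (hD2U z hz m i j).unique h2
    simpa using this
  -- Schwarz symmetry
  have hschwarz : ∀ z ∈ M, ∀ m i j, D2U z m i j = D2U z m j i := by
    intro z hz m i j
    have hsym := second_derivative_symmetric_of_eventually (f := U) (f' := fderiv ℝ U)
      (f'' := B z)
      (Filter.eventually_of_mem (hMopen.mem_nhds hz) (fun y hy => hUhas y hy)) (hBhas z hz)
    rw [hD2Ueq z hz m i j, hD2Ueq z hz m j i, hsym]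
  -- DU entries have derivatives given by D2U rows
  have hDUhas : ∀ z ∈ M, ∀ m i, HasFDerivAt (fun w => DU w m i)
      (dotC n (fun b => D2U z m i b)) z := by
    intro z hz m i
    have hnice := hniceHas z hz m i
    have heq : (((ContinuousLinearMap.proj m).comp
        (ContinuousLinearMap.apply ℝ (Fin n → ℝ) (Pi.single i 1))).comp (B z))
        = dotC n (fun b => D2U z m i b) := by
      apply clm_pi_ext
      intro b
      simp [hD2Ueq z hz m i b, Pi.single_apply, Finset.sum_ite_eq']
    rw [heq] at hnice
    apply hnice.congr_of_eventuallyEq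
    filter_upwards [hMopen.mem_nhds hz] with w hw
    exact hDUeq w hw m i
  have hDUcont : ∀ m i, ContinuousOn (fun z => DU z m i) M := fun m i z hz =>
    (hDUhas z hz m i).continuousAt.continuousWithinAt
  -- the metric g and the row functions
  set g : (Fin n → ℝ) → Matrix (Fin n) (Fin n) ℝ :=
    fun z => Matrix.of fun i j => ∑ m, DU z m i * DU z m j with hgdef
  set G : Fin n → (Fin n → ℝ) → (Fin n → ℝ) :=
    fun i z => fun a => ∑ m, DU z m i * DU z m a with hGdef
  set Jm : Fin n → (Fin n → ℝ) → Matrix (Fin n) (Fin n) ℝ :=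
    fun i z => Matrix.of fun a b => ∑ m,
      (D2U z m i b * DU z m a + DU z m i * D2U z m a b) with hJmdef
  have hGhas : ∀ i, ∀ z ∈ M, HasFDerivAt (G i) (matC n (Jm i z)) z := by
    intro i z hz
    apply hasFDerivAt_pi''
    intro a
    have hcomp : HasFDerivAt (fun w => ∑ m, DU w m i * DU w m a)
        (∑ m, (DU z m i • dotC n (fun b => D2U z m a b)
          + DU z m a • dotC n (fun b => D2U z m i b))) z :=
      HasFDerivAt.fun_sum (fun m _ => (hDUhas z hz m i).fun_mul (hDUhas z hz m a))
    have heq : (ContinuousLinearMap.proj a).comp (matC n (Jm i z))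
        = ∑ m, (DU z m i • dotC n (fun b => D2U z m a b)
          + DU z m a • dotC n (fun b => D2U z m i b)) := by
      apply clm_pi_ext
      intro b
      simp [hJmdef, Matrix.mulVec_single, Pi.single_apply, Finset.sum_ite_eq',
        Finset.sum_add_distrib]
      rw [add_comm]
      congr 1
      exact Finset.sum_congr rfl fun m _ => mul_comm _ _
    rw [heq]
    exact hcomp
  have hJsymm : ∀ i, ∀ z ∈ M, ∀ a b, Jm i z a b = Jm i z b a := by
    intro i z hz a b
    simp only [hJmdef, Matrix.of_apply]
    rw [Finset.sum_add_distrib, Finset.sum_add_distrib]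
    congr 1
    · have hc1 := hcompat z hz i a b
      have hc2 : ∑ m, D2U z m i b * DU z m a = ∑ m, D2U z m b i * DU z m a :=
        Finset.sum_congr rfl fun m _ => by rw [hschwarz z hz m i b]
      rw [hc2, hc1]
    · exact Finset.sum_congr rfl fun m _ => by rw [hschwarz z hz m a b]
  -- continuity of D2U entries and of Jm, g
  have hfdOn : ContDiffOn ℝ 1 (fderiv ℝ U) M := fun z hz => (hfd1 z hz).contDiffWithinAt
  have hBc : ContinuousOn B M := hfdOn.continuousOn_fderiv_of_isOpen hMopen le_rfl
  have hD2Ucont : ∀ m i j, ContinuousOn (fun z => D2U z m i j) M := by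
    intro m i j
    apply ContinuousOn.congr (f := fun z => B z (Pi.single j 1) (Pi.single i 1) m)
    · apply ContinuousOn.comp (continuous_apply m).continuousOn
        ((hBc.clm_apply continuousOn_const).clm_apply continuousOn_const)
      exact Set.mapsTo_univ _ _
    · intro z hz; exact hD2Ueq z hz m i j
  have hgc : ContinuousOn g M := by
    apply continuousOn_pi.2; intro i
    apply continuousOn_pi.2; intro j
    simp only [hgdef, Matrix.of_apply]
    exact continuousOn_finset_sum Finset.univ fun m _ => (hDUcont m i).mul (hDUcont m j)
  have hJc : ∀ i, ContinuousOn (Jm i) M := by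
    intro i
    apply continuousOn_pi.2; intro a
    apply continuousOn_pi.2; intro b
    simp only [hJmdef, Matrix.of_apply]
    exact continuousOn_finset_sum Finset.univ fun m _ =>
      ((hD2Ucont m i b).mul (hDUcont m a)).add ((hDUcont m i).mul (hD2Ucont m a b))
  have hgsymm : ∀ z ∈ M, ∀ a b, g z a b = g z b a := by
    intro z hz a b
    simp only [hgdef, Matrix.of_apply]
    exact Finset.sum_congr rfl fun m _ => mul_comm _ _
  -- first application of the Poincaré lemma: the gradient field V
  set V : (Fin n → ℝ) → (Fin n → ℝ) :=
    fun y => fun i => ∫ t in (0:ℝ)..1, dotC n (G i (x₀ + t • (y - x₀))) (y - x₀) with hVdef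
  have hVhas : ∀ x ∈ M, HasFDerivAt V (matC n (g x)) x := by
    intro x hx
    apply hasFDerivAt_pi''
    intro i
    have heq : (ContinuousLinearMap.proj i).comp (matC n (g x)) = dotC n (G i x) := by
      apply clm_pi_ext
      intro b
      simp [hgdef, hGdef, Matrix.mulVec_single, Pi.single_apply, Finset.sum_ite_eq']
    rw [heq]
    exact potential hMopen hMconv hx₀ (G i) (Jm i) (hGhas i) (hJc i) (hJsymm i) x hx
  -- second application: the potential Φ
  set Φ : (Fin n → ℝ) → ℝ :=
    fun y => ∫ t in (0:ℝ)..1, dotC n (V (x₀ + t • (y - x₀))) (y - x₀) with hΦdef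
  have hΦhas : ∀ x ∈ M, HasFDerivAt Φ (dotC n (V x)) x :=
    potential hMopen hMconv hx₀ V g hVhas hgc hgsymm
  refine ⟨Φ, V, ⟨hMconv, ?_⟩, ?_, ?_, ?_⟩
  · -- strict convexity
    intro x hx y hy hxy a b ha hb hab
    set L : ℝ → (Fin n → ℝ) := fun t => x + t • (y - x) with hLdef
    have hLcont : Continuous L := by fun_prop
    set I : Set ℝ := L ⁻¹' M with hIdef
    have hIopen : IsOpen I := hMopen.preimage hLcont
    have hIcc : Set.Icc (0:ℝ) 1 ⊆ I := by
      intro t ht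
      have hmem := hMconv hx hy (by linarith [ht.2] : (0:ℝ) ≤ 1 - t) ht.1 (by ring)
      show x + t • (y - x) ∈ M
      convert hmem using 1
      module
    have hne : y - x ≠ 0 := sub_ne_zero.mpr (Ne.symm hxy)
    have hlinet : ∀ t : ℝ, HasDerivAt L (y - x) t := by
      intro t
      have := ((hasDerivAt_id t).smul_const (y - x)).const_add x
      simpa [hLdef] using this
    have hψd : ∀ t ∈ I, HasDerivAt (fun t => Φ (L t)) (dotC n (V (L t)) (y - x)) t :=
      fun t ht => (hΦhas (L t) ht).comp_hasDerivAt t (hlinet t)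
    have hψcont : ContinuousOn (fun t => Φ (L t)) (Set.Icc 0 1) :=
      fun t ht => (hψd t (hIcc ht)).continuousAt.continuousWithinAt
    have hpos : ∀ t ∈ interior (Set.Icc (0:ℝ) 1), 0 < deriv^[2] (fun t => Φ (L t)) t := by
      intro t hti
      have htI : t ∈ I := hIcc (interior_subset hti)
      have hd1eq : deriv (fun t => Φ (L t)) =ᶠ[nhds t] fun s => dotC n (V (L s)) (y - x) := by
        filter_upwards [hIopen.mem_nhds htI] with s hs
        exact (hψd s hs).deriv
      have hd2 : HasDerivAt (fun s => dotC n (V (L s)) (y - x))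
          (dotC n (matC n (g (L t)) (y - x)) (y - x)) t := by
        have hVL : HasDerivAt (fun s => V (L s)) (matC n (g (L t)) (y - x)) t :=
          (hVhas (L t) htI).comp_hasDerivAt t (hlinet t)
        exact (((dotC n).flip (y - x)).hasFDerivAt).comp_hasDerivAt t hVL
      have hiter : deriv^[2] (fun t => Φ (L t)) t
          = dotC n (matC n (g (L t)) (y - x)) (y - x) := by
        show deriv (deriv (fun t => Φ (L t))) t = _
        rw [hd1eq.deriv_eq]
        exact hd2.deriv
      rw [hiter]
      have hq := quad_pos (DU (L t)) (hDUinv _ htI) (y - x) hne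
      simpa [hgdef, Matrix.mulVec, dotProduct] using hq
    have hsc := strictConvexOn_of_deriv2_pos (convex_Icc 0 1) hψcont hpos
    have hval := hsc.2 (Set.left_mem_Icc.2 zero_le_one) (Set.right_mem_Icc.2 zero_le_one)
      (by norm_num : (0:ℝ) ≠ 1) ha hb hab
    simp only [smul_eq_mul, mul_zero, mul_one, zero_add] at hval
    have hL0 : L 0 = x := by simp [hLdef]
    have hL1 : L 1 = y := by simp [hLdef]
    have hLb : L b = a • x + b • y := by
      have ha' : a = 1 - b := by linarith
      rw [hLdef]
      subst ha'
      module
    rw [hL0, hL1, hLb] at hval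
    exact hval
  · -- smoothness
    intro z hz
    apply ContDiffAt.contDiffWithinAt
    have h2 : ContDiffAt ℝ ((1:ℕ) + 1) Φ z := by
      rw [contDiffAt_succ_iff_hasFDerivAt]
      refine ⟨fun y => dotC n (V y), ⟨M, hMopen.mem_nhds hz, fun y hy => hΦhas y hy⟩, ?_⟩
      have hV1 : ContDiffAt ℝ ((0:ℕ) + 1) V z := by
        rw [contDiffAt_succ_iff_hasFDerivAt]
        refine ⟨fun y => matC n (g y), ⟨M, hMopen.mem_nhds hz, fun y hy => hVhas y hy⟩, ?_⟩
        have h0 : ContDiffAt ℝ 0 (fun y => matC n (g y)) z := by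
          rw [contDiffAt_zero]
          exact ⟨M, hMopen.mem_nhds hz, (matC n).continuous.comp_continuousOn hgc⟩
        exact_mod_cast h0
      have hV1' : ContDiffAt ℝ 1 V z := by exact_mod_cast hV1
      have hdV : ContDiffAt ℝ 1 (fun y => dotC n (V y)) z :=
        ContDiff.comp_contDiffAt z (dotC n).contDiff hV1'
      exact_mod_cast hdV
    exact_mod_cast h2
  · -- gradient
    intro z hz i
    have h0 : HasDerivAt (Function.update z i) (Pi.single i 1) (z i) :=
      hasDerivAt_update z i (z i)
    have hΦz : HasFDerivAt Φ (dotC n (V z)) (Function.update z i (z i)) := by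
      rw [Function.update_eq_self]; exact hΦhas z hz
    have h1 := hΦz.comp_hasDerivAt (z i) h0
    simpa [Function.comp_def, Pi.single_apply, Finset.sum_ite_eq'] using h1
  · -- hessian
    intro z hz i j
    have h0 : HasDerivAt (Function.update z j) (Pi.single j 1) (z j) :=
      hasDerivAt_update z j (z j)
    have hVz : HasFDerivAt V (matC n (g z)) (Function.update z j (z j)) := by
      rw [Function.update_eq_self]; exact hVhas z hz
    have h1 := hVz.comp_hasDerivAt (z j) h0
    have h2 := (ContinuousLinearMap.proj (R := ℝ) (φ := fun _ : Fin n => ℝ)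
      i).hasFDerivAt.comp_hasDerivAt (z j) h1
    simpa [Function.comp_def, hgdef, Matrix.mulVec_single] using h2
end

section
/- Let Φ : ℝⁿ → ℝ be C² strictly convex with ∇Φ a global diffeomorphism of ℝⁿ, and suppose the Hessian factors as Φ''(x) = DU(x)ᵀDU(x) for a diffeomorphism U of ℝⁿ. Define U*(ξ) = U((∇Φ)⁻¹(ξ)). Then DU*(ξ)ᵀDU*(ξ) equals the Hessian of the Fenchel conjugate Φ* at ξ, and consequently the geodesic distances agree: ‖U*(ξ₁) - U*(ξ₂)‖ = ‖U(x₁) - U(x₂)‖ whenever ξᵢ = ∇Φ(xᵢ). -/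
/-! By the chain rule applied to `∇Φ ∘ (∇Φ)⁻¹ = id`, the Hessian `L = D(∇Φ)⁻¹(ξ)` of `Φ*` is a
right inverse of `H = Φ''(x)`, `x = (∇Φ)⁻¹(ξ)`. Since `H = DU(x)ᵀDU(x)` is symmetric,
`DU*(ξ)ᵀDU*(ξ) = Lᵀ H L = L`. The distance identity holds because `U*(∇Φ(x)) = U(x)`. -/

theorem fderiv_apply_fderiv_of_leftInverse {𝕜 E F : Type*} [NontriviallyNormedField 𝕜]
    [NormedAddCommGroup E] [NormedSpace 𝕜 E] [NormedAddCommGroup F] [NormedSpace 𝕜 F]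
    {f : E → F} {g : F → E} (hgf : Function.LeftInverse g f) {x : E}
    (hg : DifferentiableAt 𝕜 g (f x)) (hf : DifferentiableAt 𝕜 f x) (u : E) :
    fderiv 𝕜 g (f x) (fderiv 𝕜 f x u) = u := by
  have hcomp : fderiv 𝕜 (g ∘ f) x = (fderiv 𝕜 g (f x)).comp (fderiv 𝕜 f x) :=
    fderiv_comp x hg hf
  rw [hgf.comp_eq_id, fderiv_id] at hcomp
  exact (ContinuousLinearMap.ext_iff.mp hcomp u).symm

section GramFactorization

open scoped InnerProductSpace

variable {E F : Type*} [NormedAddCommGroup E] [InnerProductSpace ℝ E]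
  [NormedAddCommGroup F] [InnerProductSpace ℝ F]

theorem inner_apply_symm_of_inner_map_map {A : E →L[ℝ] F} {H : E →L[ℝ] E}
    (hfact : ∀ v w, ⟪A v, A w⟫_ℝ = ⟪v, H w⟫_ℝ) (v w : E) :
    ⟪v, H w⟫_ℝ = ⟪H v, w⟫_ℝ := by
  rw [← hfact, real_inner_comm, hfact, real_inner_comm]

theorem inner_comp_comp_of_rightInverse {A : E →L[ℝ] F} {H L : E →L[ℝ] E}
    (hfact : ∀ v w, ⟪A v, A w⟫_ℝ = ⟪v, H w⟫_ℝ) (hHL : ∀ u, H (L u) = u) (v w : E) :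
    ⟪(A.comp L) v, (A.comp L) w⟫_ℝ = ⟪v, L w⟫_ℝ := by
  calc ⟪(A.comp L) v, (A.comp L) w⟫_ℝ = ⟪L v, H (L w)⟫_ℝ := hfact _ _
    _ = ⟪H (L v), L w⟫_ℝ := inner_apply_symm_of_inner_map_map hfact _ _
    _ = ⟪v, L w⟫_ℝ := by rw [hHL]

end GramFactorization

theorem conjugate_factorization_and_distance_general
    (n : ℕ)
    (gradΦ : EuclideanSpace ℝ (Fin n) → EuclideanSpace ℝ (Fin n))
    (hgradC1 : ContDiff ℝ 1 gradΦ)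
    (Finv : EuclideanSpace ℝ (Fin n) → EuclideanSpace ℝ (Fin n))
    (hFinvC1 : ContDiff ℝ 1 Finv)
    (hFinv₁ : ∀ x, Finv (gradΦ x) = x)
    (hFinv₂ : ∀ ξ, gradΦ (Finv ξ) = ξ)
    (U : EuclideanSpace ℝ (Fin n) → EuclideanSpace ℝ (Fin n))
    (hU : ContDiff ℝ 1 U)
    -- DU(x)ᵀ DU(x) = Φ''(x), expressed via inner products of derivatives:
    (hfact : ∀ x, ∀ v w : EuclideanSpace ℝ (Fin n),
      (inner ℝ (fderiv ℝ U x v) (fderiv ℝ U x w) : ℝ) =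
        (inner ℝ v (fderiv ℝ gradΦ x w) : ℝ)) :
    -- U*(ξ) := U (Finv ξ); its Jacobian factors the Hessian of Φ* (= fderiv Finv),
    -- and the geodesic distances agree.
    (∀ ξ, ∀ v w : EuclideanSpace ℝ (Fin n),
      (inner ℝ (fderiv ℝ (fun η => U (Finv η)) ξ v)
             (fderiv ℝ (fun η => U (Finv η)) ξ w) : ℝ) =
        (inner ℝ v (fderiv ℝ Finv ξ w) : ℝ)) ∧
    (∀ x₁ x₂ : EuclideanSpace ℝ (Fin n),
      ‖U (Finv (gradΦ x₁)) - U (Finv (gradΦ x₂))‖ = ‖U x₁ - U x₂‖) := by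
  have hFinvd := hFinvC1.differentiable one_ne_zero
  have hgradd := hgradC1.differentiable one_ne_zero
  refine ⟨fun ξ => ?_, fun x₁ x₂ => by rw [hFinv₁, hFinv₁]⟩
  have hchain : fderiv ℝ (fun η => U (Finv η)) ξ =
      (fderiv ℝ U (Finv ξ)).comp (fderiv ℝ Finv ξ) :=
    fderiv_comp ξ ((hU.differentiable one_ne_zero) _) (hFinvd ξ)
  rw [hchain]
  exact inner_comp_comp_of_rightInverse (hfact (Finv ξ))
    (fderiv_apply_fderiv_of_leftInverse hFinv₂ (hgradd _) (hFinvd ξ))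

theorem conjugate_factorization_and_distance
    (n : ℕ) (Φ : EuclideanSpace ℝ (Fin n) → ℝ)
    (hΦ : ContDiff ℝ 2 Φ) (hconv : StrictConvexOn ℝ Set.univ Φ)
    (gradΦ : EuclideanSpace ℝ (Fin n) → EuclideanSpace ℝ (Fin n))
    (hgrad : ∀ x, HasGradientAt Φ (gradΦ x) x)
    (hgradC1 : ContDiff ℝ 1 gradΦ)
    (Finv : EuclideanSpace ℝ (Fin n) → EuclideanSpace ℝ (Fin n))
    (hFinvC1 : ContDiff ℝ 1 Finv)
    (hFinv₁ : ∀ x, Finv (gradΦ x) = x)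
    (hFinv₂ : ∀ ξ, gradΦ (Finv ξ) = ξ)
    (U : EuclideanSpace ℝ (Fin n) → EuclideanSpace ℝ (Fin n))
    (hU : ContDiff ℝ 1 U) (hUbij : Function.Bijective U)
    -- DU(x)ᵀ DU(x) = Φ''(x), expressed via inner products of derivatives:
    (hfact : ∀ x, ∀ v w : EuclideanSpace ℝ (Fin n),
      (inner ℝ (fderiv ℝ U x v) (fderiv ℝ U x w) : ℝ) =
        (inner ℝ v (fderiv ℝ gradΦ x w) : ℝ)) :
    -- U*(ξ) := U (Finv ξ); its Jacobian factors the Hessian of Φ* (= fderiv Finv),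
    -- and the geodesic distances agree.
    (∀ ξ, ∀ v w : EuclideanSpace ℝ (Fin n),
      (inner ℝ (fderiv ℝ (fun η => U (Finv η)) ξ v)
             (fderiv ℝ (fun η => U (Finv η)) ξ w) : ℝ) =
        (inner ℝ v (fderiv ℝ Finv ξ w) : ℝ)) ∧
    (∀ x₁ x₂ : EuclideanSpace ℝ (Fin n),
      ‖U (Finv (gradΦ x₁)) - U (Finv (gradΦ x₂))‖ = ‖U x₁ - U x₂‖) :=
  conjugate_factorization_and_distance_general n gradΦ hgradC1 Finv hFinvC1 hFinv₁ hFinv₂ U hU hfact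
end
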